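/- arXiv:0909.4393 — 13 statements merged into one kernel-verified Lean document; each statement's English description precedes it below -/
import Mathlib

section
/- Let G be a finite group with proper subgroups A and B, and let G act by right multiplication on the set Ω_B of right cosets of B. Set β = B ∈ Ω_B and Γ = β^A. Then G = ABA if and only if Γ has restricted movement, i.e. Γ^g ∩ Γ ≠ ∅ for every g ∈ G. -/
open scoped Pointwise

/-! `Γ = β^A` meets `gΓ` exactly when `g a₁ B = a₂ B` for some `a₁, a₂ ∈ A`, i.e. when
`g ∈ a₂ B a₁⁻¹ ⊆ ABA`; so `Γ` has restricted movement iff every `g` lies in `ABA`. -/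

namespace Subgroup

variable {G : Type*} [Group G] (A B : Subgroup G)

theorem mem_orbit_mk_one_iff (x : G ⧸ B) :
    x ∈ MulAction.orbit A ((1 : G) : G ⧸ B) ↔ ∃ a ∈ A, ((a : G) : G ⧸ B) = x := by
  have smul_one (a : A) : a • ((1 : G) : G ⧸ B) = ((a : G) : G ⧸ B) :=
    congrArg QuotientGroup.mk (mul_one (a : G))
  simp only [MulAction.mem_orbit_iff, smul_one, Subtype.exists, exists_prop]

theorem mem_mul_mul_iff_exists_inv_mul_mul_mem (g : G) :
    g ∈ (A : Set G) * (B : Set G) * (A : Set G) ↔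
      ∃ a₁ ∈ A, ∃ a₂ ∈ A, a₂⁻¹ * (g * a₁) ∈ B := by
  constructor
  · rintro ⟨_, ⟨a₂, ha₂, b, hb, rfl⟩, a₁, ha₁, rfl⟩
    exact ⟨a₁⁻¹, inv_mem ha₁, a₂, ha₂, by simpa [mul_assoc] using hb⟩
  · rintro ⟨a₁, ha₁, a₂, ha₂, hb⟩
    exact ⟨a₂ * (a₂⁻¹ * (g * a₁)), ⟨a₂, ha₂, _, hb, rfl⟩, a₁⁻¹, inv_mem ha₁, by group⟩

theorem smul_orbit_mk_one_inter_nonempty_iff (g : G) :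
    (g • MulAction.orbit A ((1 : G) : G ⧸ B) ∩ MulAction.orbit A ((1 : G) : G ⧸ B)).Nonempty ↔
      g ∈ (A : Set G) * (B : Set G) * (A : Set G) := by
  simp only [mem_mul_mul_iff_exists_inv_mul_mul_mem, Set.Nonempty, Set.mem_inter_iff,
    Set.mem_smul_set, mem_orbit_mk_one_iff]
  constructor
  · rintro ⟨_, ⟨_, ⟨a₁, ha₁, rfl⟩, rfl⟩, a₂, ha₂, hg⟩
    exact ⟨a₁, ha₁, a₂, ha₂, QuotientGroup.eq.1 (hg : ((a₂ : G) : G ⧸ B) = ((g * a₁ : G) : G ⧸ B))⟩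
  · rintro ⟨a₁, ha₁, a₂, ha₂, hb⟩
    exact ⟨_, ⟨_, ⟨a₁, ha₁, rfl⟩, rfl⟩, a₂, ha₂, QuotientGroup.eq.2 hb⟩

end Subgroup

theorem triple_factorisation_iff_restricted_movement_general
    (G : Type*) [Group G] (A B : Subgroup G) :
    (A : Set G) * (B : Set G) * (A : Set G) = Set.univ ↔
      ∀ g : G,
        (g • MulAction.orbit A ((1 : G) : G ⧸ B) ∩
          MulAction.orbit A ((1 : G) : G ⧸ B)).Nonempty := by
  simp only [Set.eq_univ_iff_forall, Subgroup.smul_orbit_mk_one_inter_nonempty_iff]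

/-- Restricted movement criterion: `G = ABA` iff the `A`-orbit `Γ` of the
trivial coset `β = B` in `Ω_B = G ⧸ B` has restricted movement, i.e.
`gΓ ∩ Γ ≠ ∅` for every `g ∈ G`. -/
theorem triple_factorisation_iff_restricted_movement
    (G : Type*) [Group G] [Fintype G] (A B : Subgroup G)
    (hA : A ≠ ⊤) (hB : B ≠ ⊤) :
    (A : Set G) * (B : Set G) * (A : Set G) = Set.univ ↔
      ∀ g : G,
        (g • MulAction.orbit A ((1 : G) : G ⧸ B) ∩
          MulAction.orbit A ((1 : G) : G ⧸ B)).Nonempty :=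
  triple_factorisation_iff_restricted_movement_general G A B
end

section
/- If G = ABA is a nontrivial triple factorisation of a finite group G (i.e. A ≠ G and B ≠ G), then |G| ≤ |A|²|B|/|A∩B|² − |A||B|/|A∩B| + |B|. -/
open scoped Pointwise
open Finset

/-!
Put `D = AB`, so that `DB = D` and `G = ABA` says `DD⁻¹ = G`: every left translate `gD` meets `D`,
hence in at least `|B|` points. The function `r(x) = #{d ∈ D | dx ∈ D}` equals `|D|` on `B`, has
`∑ r = |D|²`, and `∑ r² = ∑_{d,e ∈ D} |ed⁻¹D ∩ D| ≤ |D| (|D|² - (|G| - |D|)|B|)`, because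
`∑_g |gD ∩ D| = |D|²` and each of the `|G| - |D|` translates `gD` with `g ∉ Dd⁻¹` contributes at
least `|B|` to it. Cauchy–Schwarz for `r` on `G ∖ B` gives, writing `|D| = k|B|` and `|G| = n|B|`,
`k(k-1)² ≤ (n-1)(k² - n)`, that is `(n - k)(n - (k² - k + 1)) ≤ 0`, whence `n ≤ k² - k + 1`.
The product formula `|AB| |A ∩ B| = |A| |B|` turns this into the stated bound.
-/

namespace Finset

lemma card_le_card_filter_mul_mem {G : Type*} [Group G] [DecidableEq G] {D S : Finset G}
    (hDS : D * S ⊆ D) {g d : G} (hd : d ∈ D) (hgd : g * d ∈ D) :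
    #S ≤ #{e ∈ D | g * e ∈ D} := by
  refine card_le_card_of_injOn (d * ·) (fun s hs => ?_) (mul_right_injective d).injOn
  rw [coe_filter, Set.mem_ofPred_eq, ← mul_assoc]
  exact ⟨hDS (mul_mem_mul hd hs), hDS (mul_mem_mul hgd hs)⟩

variable {G : Type*} [Group G] [Fintype G] [DecidableEq G] {D S : Finset G}

lemma exists_mem_mul_mem_of_mul_inv_eq_univ (hD : D * D⁻¹ = univ) (g : G) :
    ∃ d ∈ D, g * d ∈ D := by
  obtain ⟨x, hx, y, hy, rfl⟩ := mem_mul.1 (hD ▸ mem_univ g)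
  exact ⟨y⁻¹, mem_inv'.1 hy, by rwa [mul_inv_cancel_right]⟩

lemma sum_card_filter_mul_mem_left (D : Finset G) : ∑ g, #{d ∈ D | g * d ∈ D} = #D ^ 2 := by
  simp_rw [card_filter]
  rw [sum_comm, sq, ← smul_eq_mul, ← sum_const]
  refine sum_congr rfl fun d _ => ?_
  exact (Equiv.sum_comp (Equiv.mulRight d) (fun g => if g ∈ D then 1 else 0)).trans (by simp)

lemma sum_card_filter_mul_mem_right (D : Finset G) : ∑ x, #{d ∈ D | d * x ∈ D} = #D ^ 2 := by
  simp_rw [card_filter]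
  rw [sum_comm, sq, ← smul_eq_mul, ← sum_const]
  refine sum_congr rfl fun d _ => ?_
  exact (Equiv.sum_comp (Equiv.mulLeft d) (fun g => if g ∈ D then 1 else 0)).trans (by simp)

lemma sum_sq_card_filter_mul_mem_right (D : Finset G) :
    ∑ x, #{d ∈ D | d * x ∈ D} ^ 2 = ∑ d ∈ D, ∑ e ∈ D, #{f ∈ D | e * d⁻¹ * f ∈ D} := by
  simp_rw [sq, card_filter, sum_mul_sum]
  rw [sum_comm]
  refine sum_congr rfl fun d _ => ?_
  rw [sum_comm]
  refine sum_congr rfl fun e _ => ?_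
  calc ∑ x, (if d * x ∈ D then 1 else 0) * (if e * x ∈ D then 1 else 0)
      = ∑ x, if d * x ∈ D ∧ e * d⁻¹ * (d * x) ∈ D then 1 else 0 := by
        simp only [mul_assoc, inv_mul_cancel_left, boole_mul, ite_and]
    _ = ∑ f, if f ∈ D ∧ e * d⁻¹ * f ∈ D then 1 else 0 :=
        Equiv.sum_comp (Equiv.mulLeft d) (fun f => if f ∈ D ∧ e * d⁻¹ * f ∈ D then 1 else 0)
    _ = ∑ f ∈ D, if e * d⁻¹ * f ∈ D then 1 else 0 := by
        rw [← sum_filter, ← sum_filter, ← filter_filter, filter_univ_mem]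

lemma sum_card_filter_mul_mem_add_le (hDS : D * S ⊆ D) (hD : D * D⁻¹ = univ) (d : G) :
    ∑ e ∈ D, #{f ∈ D | e * d⁻¹ * f ∈ D} + Fintype.card G * #S ≤ #D ^ 2 + #D * #S := by
  set T := D.map (Equiv.mulRight d⁻¹).toEmbedding
  have hT : ∑ e ∈ D, #{f ∈ D | e * d⁻¹ * f ∈ D} = ∑ g ∈ T, #{f ∈ D | g * f ∈ D} := by
    rw [sum_map]; rfl
  have hcard : #Tᶜ + #D = Fintype.card G := by
    rw [card_compl, card_map, Nat.sub_add_cancel (card_le_univ D)]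
  have hcompl : #Tᶜ * #S ≤ ∑ g ∈ Tᶜ, #{f ∈ D | g * f ∈ D} := by
    rw [← smul_eq_mul]
    refine card_nsmul_le_sum _ _ _ fun g _ => ?_
    obtain ⟨e, he, hge⟩ := exists_mem_mul_mem_of_mul_inv_eq_univ hD g
    exact card_le_card_filter_mul_mem hDS he hge
  have htotal := sum_add_sum_compl T fun g => #{f ∈ D | g * f ∈ D}
  rw [sum_card_filter_mul_mem_left] at htotal
  rw [hT, ← hcard, add_mul]
  linarith

theorem card_mul_card_add_le_of_mul_inv_eq_univ (hDS : D * S ⊆ D) (hD : D * D⁻¹ = univ) :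
    Fintype.card G * #S + #D * #S ≤ #D ^ 2 + #S ^ 2 := by
  set r : G → ℕ := fun x => #{d ∈ D | d * x ∈ D}
  have hrS : ∀ x ∈ S, r x = #D := fun x hx =>
    congrArg card (filter_true_of_mem fun d hd => hDS (mul_mem_mul hd hx))
  have hsum : ∑ x ∈ Sᶜ, r x + #S * #D = #D ^ 2 := by
    rw [← sum_card_filter_mul_mem_right D, ← sum_compl_add_sum S r, sum_congr rfl hrS, sum_const,
      smul_eq_mul]
  have hsumsq : ∑ x ∈ Sᶜ, r x ^ 2 + #S * #D ^ 2 + #D * (Fintype.card G * #S)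
      ≤ #D * (#D ^ 2 + #D * #S) := by
    have := sum_le_sum fun d (_ : d ∈ D) => sum_card_filter_mul_mem_add_le hDS hD d
    rw [sum_add_distrib, ← sum_sq_card_filter_mul_mem_right, ← sum_compl_add_sum S,
      sum_congr rfl fun x hx => congrArg (· ^ 2) (hrS x hx), sum_const, sum_const, sum_const] at this
    simpa only [smul_eq_mul] using this
  have hcs : (∑ x ∈ Sᶜ, r x) ^ 2 ≤ #Sᶜ * ∑ x ∈ Sᶜ, r x ^ 2 := sq_sum_le_card_mul_sum_sq
  obtain ⟨d, hd, -⟩ := exists_mem_mul_mem_of_mul_inv_eq_univ hD 1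
  have hm : 0 < #D := card_pos.2 ⟨d, hd⟩
  rw [← card_compl_add_card S] at hsumsq ⊢
  set s₁ := ∑ x ∈ Sᶜ, r x
  set s₂ := ∑ x ∈ Sᶜ, r x ^ 2
  set m := #D
  set b := #S
  set c := #Sᶜ
  zify at hsum hsumsq hcs hm ⊢
  have hs₁ : (s₁ : ℤ) = m * (m - b) := by linarith
  have hs₂ : (s₂ : ℤ) ≤ m * (m ^ 2 - (c + b) * b) := by linarith
  have key : (m : ℤ) * (m - b) ^ 2 ≤ c * (m ^ 2 - (c + b) * b) := by
    refine le_of_mul_le_mul_left ?_ hm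
    calc (m : ℤ) * (m * (m - b) ^ 2) = (m * (m - b)) ^ 2 := by ring
      _ ≤ (c : ℤ) * s₂ := hs₁ ▸ hcs
      _ ≤ c * (m * (m ^ 2 - (c + b) * b)) := mul_le_mul_of_nonneg_left hs₂ (by positivity)
      _ = m * (c * (m ^ 2 - (c + b) * b)) := by ring
  -- With `N = c + b`, `key` says `(N - m) (Nb - (m² - mb + b²)) ≤ 0`, and `mb ≤ m² - mb + b²`.
  nlinarith [sq_nonneg ((m : ℤ) - b)]

end Finset

theorem Subgroup.card_coe_mul_coe_mul_card_inf {G : Type*} [Group G] (A B : Subgroup G) :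
    Nat.card ((A : Set G) * (B : Set G)) * Nat.card ↥(A ⊓ B) = Nat.card A * Nat.card B := by
  have hsmul (a : A) : a • ((1 : G) : G ⧸ B) = ((a : G) : G ⧸ B) :=
    congrArg QuotientGroup.mk (mul_one (a : G))
  have himage : ((↑) '' (A : Set G) : Set (G ⧸ B)) = MulAction.orbit A ((1 : G) : G ⧸ B) := by
    ext x
    simp [MulAction.orbit, hsmul]
  have hstab : MulAction.stabilizer A ((1 : G) : G ⧸ B) = B.subgroupOf A := by
    ext a
    simp [hsmul, QuotientGroup.eq, Subgroup.mem_subgroupOf]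
  rw [Subgroup.card_mul_eq_card_subgroup_mul_card_quotient, himage, Nat.card_coe_set_eq,
    ← MulAction.index_stabilizer, hstab, ← Subgroup.relIndex, ← Subgroup.inf_relIndex_left,
    ← Subgroup.relIndex_bot_left, ← Subgroup.relIndex_bot_left, ← Subgroup.relIndex_bot_left,
    ← Subgroup.relIndex_mul_relIndex ⊥ (A ⊓ B) A bot_le inf_le_left]
  ring

theorem card_bound_of_triple_factorisation_general
    (G : Type*) [Group G] [Fintype G] (A B : Subgroup G)
    (hABA : (A : Set G) * (B : Set G) * (A : Set G) = Set.univ) :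
    (Nat.card G : ℚ) ≤
      (Nat.card A : ℚ) ^ 2 * (Nat.card B : ℚ) / (Nat.card (A ⊓ B : Subgroup G) : ℚ) ^ 2
        - (Nat.card A : ℚ) * (Nat.card B : ℚ) / (Nat.card (A ⊓ B : Subgroup G) : ℚ)
        + (Nat.card B : ℚ) := by
  classical
  have hBB : (B : Set G) * B = B := B.toSubmonoid.coe_mul_self_eq
  have hDS : ((A : Set G) * B).toFinset * (B : Set G).toFinset ⊆ ((A : Set G) * B).toFinset := by
    rw [← coe_subset, coe_mul, Set.coe_toFinset, Set.coe_toFinset, mul_assoc, hBB]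
  have hD : ((A : Set G) * B).toFinset * ((A : Set G) * B).toFinset⁻¹ = univ := by
    rw [← coe_inj, coe_mul, coe_inv, Set.coe_toFinset, coe_univ, mul_inv_rev, inv_coe_set,
      inv_coe_set, ← mul_assoc, mul_assoc (A : Set G), hBB, hABA]
  have hcount := card_mul_card_add_le_of_mul_inv_eq_univ hDS hD
  simp only [Set.toFinset_card, ← Nat.card_eq_fintype_card] at hcount
  set m := Nat.card ((A : Set G) * (B : Set G))
  set b := Nat.card B
  have hb : (0 : ℚ) < b := by exact_mod_cast Nat.card_pos
  have hc : (0 : ℚ) < Nat.card ↥(A ⊓ B) := by exact_mod_cast Nat.card_pos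
  have hm : (Nat.card A : ℚ) * b / Nat.card ↥(A ⊓ B) = m := by
    rw [div_eq_iff hc.ne']
    exact_mod_cast (Subgroup.card_coe_mul_coe_mul_card_inf A B).symm
  have hcount_rat : (Nat.card G : ℚ) * b + m * b ≤ m ^ 2 + b ^ 2 := by exact_mod_cast hcount
  calc (Nat.card G : ℚ) ≤ (m ^ 2 - m * b + b ^ 2) / b := by rw [le_div_iff₀ hb]; linarith
    _ = _ := by rw [← hm]; field_simp

/-- Upper bound for a nontrivial triple factorisation `G = ABA`:
`|G| ≤ |A|²|B|/|A∩B|² − |A||B|/|A∩B| + |B|`. -/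
theorem card_bound_of_triple_factorisation
    (G : Type*) [Group G] [Fintype G] (A B : Subgroup G)
    (hA : A ≠ ⊤) (hB : B ≠ ⊤)
    (hABA : (A : Set G) * (B : Set G) * (A : Set G) = Set.univ) :
    (Nat.card G : ℚ) ≤
      (Nat.card A : ℚ) ^ 2 * (Nat.card B : ℚ) / (Nat.card (A ⊓ B : Subgroup G) : ℚ) ^ 2
        - (Nat.card A : ℚ) * (Nat.card B : ℚ) / (Nat.card (A ⊓ B : Subgroup G) : ℚ)
        + (Nat.card B : ℚ) :=
  card_bound_of_triple_factorisation_general G A B hABA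
end

section
/- Let G be a finite group acting 2-transitively on a finite set Ω, let α ∈ Ω, A = G_α, and B a proper subgroup of G. Then G = ABA if and only if B is not contained in A; and in that case G ≠ AB if and only if B is intransitive on Ω. -/
open scoped Pointwise

/-- For a 2-transitive action of `G` on a finite set `Ω` with point stabiliser
`A = G_α` and a proper subgroup `B`: `G = ABA` iff `B ≰ A`, and in that case
`G ≠ AB` iff `B` is intransitive on `Ω`. -/
theorem two_transitive_triple_factorisation
    (G : Type*) [Group G] [Fintype G]
    (Ω : Type*) [Fintype Ω] [MulAction G Ω]
    (h2trans : ∀ α β γ δ : Ω, α ≠ β → γ ≠ δ → ∃ g : G, g • α = γ ∧ g • β = δ)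
    (hcard : 2 ≤ Fintype.card Ω)
    (α : Ω) (A B : Subgroup G) (hA : A = MulAction.stabilizer G α) (hB : B ≠ ⊤) :
    ((A : Set G) * (B : Set G) * (A : Set G) = Set.univ ↔ ¬ B ≤ A) ∧
      (¬ B ≤ A →
        ((A : Set G) * (B : Set G) ≠ Set.univ ↔ ¬ ∀ ω : Ω, ∃ b ∈ B, b • α = ω)) := by
  subst hA
  set A := MulAction.stabilizer G α with hAdef
  constructor
  · constructor
    · -- ABA = G → B ≰ A
      intro hABA hle
      obtain ⟨β, hβ⟩ := Fintype.exists_ne_of_one_lt_card (by omega) α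
      obtain ⟨g, hg1, hg2⟩ := h2trans α β β α (Ne.symm hβ) hβ
      have hgmem : g ∈ (A : Set G) * (B : Set G) * (A : Set G) := by
        rw [hABA]; exact Set.mem_univ g
      have : g ∈ A := by
        obtain ⟨y, hy, c, hc, rfl⟩ := Set.mem_mul.mp hgmem
        obtain ⟨a, ha, b, hb, rfl⟩ := Set.mem_mul.mp hy
        exact mul_mem (mul_mem ha (hle hb)) hc
      have : g • α = α := this
      rw [hg1] at this
      exact hβ this
    · -- B ≰ A → ABA = G
      intro hBA
      obtain ⟨b, hbB, hbA⟩ := SetLike.not_le_iff_exists.mp hBA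
      have hbα : b • α ≠ α := fun h => hbA h
      ext g
      simp only [Set.mem_univ, iff_true]
      by_cases hg : g • α = α
      · have hgA : g ∈ (A : Set G) := hg
        have := Set.mul_mem_mul (Set.mul_mem_mul hgA (one_mem B)) (one_mem A)
        simpa using this
      · obtain ⟨a, ha1, ha2⟩ := h2trans α (b • α) α (g • α) (Ne.symm hbα) (Ne.symm hg)
        have haA : a ∈ (A : Set G) := ha1
        have habα : (a * b) • α = g • α := by rw [mul_smul, ha2]
        have hcA : (a * b)⁻¹ * g ∈ (A : Set G) := by
          show ((a * b)⁻¹ * g) • α = α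
          rw [mul_smul, ← habα, inv_smul_smul]
        have := Set.mul_mem_mul (Set.mul_mem_mul haA hbB) hcA
        rwa [mul_inv_cancel_left] at this
  · intro _
    constructor
    · -- AB ≠ G → B not transitive
      intro hne ht
      apply hne
      ext g
      simp only [Set.mem_univ, iff_true]
      obtain ⟨b, hb, hbα⟩ := ht (g⁻¹ • α)
      have hgbA : g * b ∈ (A : Set G) := by
        show (g * b) • α = α
        rw [mul_smul, hbα, smul_inv_smul]
      have := Set.mul_mem_mul hgbA (inv_mem hb : b⁻¹ ∈ (B : Set G))
      simpa [mul_inv_cancel_right] using this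
    · -- B not transitive → AB ≠ G
      intro hnt heq
      apply hnt
      intro ω
      by_cases hω : ω = α
      · exact ⟨1, one_mem B, by simpa using hω.symm⟩
      · obtain ⟨g, hg1, _⟩ := h2trans α ω ω α (fun h => hω h.symm) hω
        have hgmem : g⁻¹ ∈ (A : Set G) * (B : Set G) := by
          rw [heq]; exact Set.mem_univ _
        obtain ⟨a, ha, b, hb, hab⟩ := Set.mem_mul.mp hgmem
        refine ⟨b⁻¹, inv_mem hb, ?_⟩
        have haα : a⁻¹ • α = α := by
          have : a • α = α := ha
          exact inv_smul_eq_iff.mpr this.symm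
        have hG : b⁻¹ * a⁻¹ = g := by
          rw [← mul_inv_rev, hab, inv_inv]
        calc b⁻¹ • α = b⁻¹ • (a⁻¹ • α) := by rw [haα]
          _ = (b⁻¹ * a⁻¹) • α := (mul_smul _ _ _).symm
          _ = g • α := by rw [hG]
          _ = ω := hg1
end

section
/- Let n ≥ 3, G = Sym({1,…,n}), A = G_1 (the stabiliser of the point 1), B = ⟨(1,3)⟩, and x = (1,2). Then G = ABA but G ≠ A B^x A. -/
open scoped Pointwise

/-- In `G = Sym({1,…,n})` (`n ≥ 3`) with `A` the stabiliser of the point `1`,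
`B = ⟨(1,3)⟩` and `x = (1,2)`: `G = ABA` but `G ≠ A B^x A`. -/
theorem conjugate_destroys_triple_factorisation
    (n : ℕ) (hn : 3 ≤ n)
    (A B Bx : Subgroup (Equiv.Perm (Fin n))) (x : Equiv.Perm (Fin n))
    (hA : A = MulAction.stabilizer (Equiv.Perm (Fin n)) (⟨0, by omega⟩ : Fin n))
    (hB : B = Subgroup.closure {Equiv.swap (⟨0, by omega⟩ : Fin n) ⟨2, by omega⟩})
    (hx : x = Equiv.swap (⟨0, by omega⟩ : Fin n) ⟨1, by omega⟩)
    (hBx : Bx = Subgroup.map (MulAut.conj x⁻¹).toMonoidHom B) :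
    (A : Set (Equiv.Perm (Fin n))) * (B : Set (Equiv.Perm (Fin n))) *
        (A : Set (Equiv.Perm (Fin n))) = Set.univ ∧
      (A : Set (Equiv.Perm (Fin n))) * (Bx : Set (Equiv.Perm (Fin n))) *
        (A : Set (Equiv.Perm (Fin n))) ≠ Set.univ := by
  set z : Fin n := ⟨0, by omega⟩ with hz
  set o : Fin n := ⟨1, by omega⟩ with ho
  set tw : Fin n := ⟨2, by omega⟩ with htw
  have hzo : z ≠ o := by simp [hz, ho, Fin.ext_iff]
  have hztw : z ≠ tw := by simp [hz, htw, Fin.ext_iff]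
  have hotw : o ≠ tw := by simp [ho, htw, Fin.ext_iff]
  have hmemA : ∀ g : Equiv.Perm (Fin n), g ∈ A ↔ g z = z := by
    intro g; rw [hA, MulAction.mem_stabilizer_iff]; rfl
  set t : Equiv.Perm (Fin n) := Equiv.swap z tw with ht
  have htB : t ∈ B := by rw [hB]; exact Subgroup.subset_closure rfl
  constructor
  · ext g
    simp only [Set.mem_univ, iff_true]
    by_cases hg0 : g z = z
    · have h1 : g * (1 : Equiv.Perm (Fin n)) ∈
          (A : Set (Equiv.Perm (Fin n))) * (B : Set (Equiv.Perm (Fin n))) :=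
        Set.mul_mem_mul ((hmemA g).mpr hg0) (one_mem B)
      have h2 := Set.mul_mem_mul h1 ((hmemA 1).mpr rfl)
      simpa using h2
    · set a : Equiv.Perm (Fin n) := Equiv.swap tw (g z) with ha
      have haA : a ∈ A :=
        (hmemA a).mpr (Equiv.swap_apply_of_ne_of_ne hztw (fun h => hg0 h.symm))
      have ha'A : t * a⁻¹ * g ∈ A := by
        refine (hmemA _).mpr ?_
        simp only [Equiv.Perm.mul_apply, ha, Equiv.swap_inv, Equiv.swap_apply_right, ht]
      have h1 : a * t ∈ (A : Set (Equiv.Perm (Fin n))) * (B : Set (Equiv.Perm (Fin n))) :=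
        Set.mul_mem_mul haA htB
      have h2 := Set.mul_mem_mul h1 ha'A
      have heq : a * t * (t * a⁻¹ * g) = g := by
        have htt : t * t = 1 := Equiv.swap_mul_self _ _
        calc a * t * (t * a⁻¹ * g) = a * (t * t) * a⁻¹ * g := by group
        _ = g := by rw [htt]; group
      rwa [heq] at h2
  · intro h
    have hBo : B ≤ MulAction.stabilizer (Equiv.Perm (Fin n)) o := by
      rw [hB]
      refine Subgroup.closure_le _ |>.mpr ?_
      intro s hs
      rw [Set.mem_singleton_iff] at hs
      subst hs
      rw [SetLike.mem_coe, MulAction.mem_stabilizer_iff]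
      exact Equiv.swap_apply_of_ne_of_ne (Ne.symm hzo) hotw
    have hxinv : x⁻¹ = x := by rw [hx, Equiv.swap_inv]
    have hBxA : (Bx : Set (Equiv.Perm (Fin n))) ⊆ (A : Set (Equiv.Perm (Fin n))) := by
      intro g hg
      rw [SetLike.mem_coe, hBx, Subgroup.mem_map] at hg
      obtain ⟨b, hb, rfl⟩ := hg
      have hbo : b o = o := hBo hb
      rw [SetLike.mem_coe, hmemA]
      show (x⁻¹ * b * x⁻¹⁻¹) z = z
      rw [inv_inv, hxinv, hx]
      simp only [Equiv.Perm.mul_apply]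
      rw [Equiv.swap_apply_left, hbo, Equiv.swap_apply_right]
    have hxuniv : x ∈ (Set.univ : Set (Equiv.Perm (Fin n))) := Set.mem_univ x
    rw [← h] at hxuniv
    obtain ⟨ab, hab, a', ha', hprod⟩ := hxuniv
    obtain ⟨a, haA, b, hbB, rfl⟩ := hab
    have hxA : x ∈ A := by
      rw [← hprod]
      exact mul_mem (mul_mem haA (hBxA hbB)) ha'
    rw [hmemA, hx, Equiv.swap_apply_left] at hxA
    exact hzo hxA.symm
end

section
/- Let G be a finite group with subgroups A, B, G = ABA, and let N ⊴ G with N ⊆ core_G(A)·core_G(B). Then G ≠ AB if and only if G ≠ ABN. -/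
open scoped Pointwise

/-- If `G = ABA` and `N ⊴ G` with `N ⊆ core_G(A)·core_G(B)`, then the
factorisation is nondegenerate (`G ≠ AB`) iff its quotient modulo `N` is
nondegenerate (`G ≠ ABN`). -/
theorem nondegenerate_iff_quotient_nondegenerate
    (G : Type*) [Group G] [Fintype G] (A B N : Subgroup G) [N.Normal]
    (hABA : (A : Set G) * (B : Set G) * (A : Set G) = Set.univ)
    (hN : (N : Set G) ⊆ (A.normalCore : Set G) * (B.normalCore : Set G)) :
    (A : Set G) * (B : Set G) ≠ Set.univ ↔
      (A : Set G) * (B : Set G) * (N : Set G) ≠ Set.univ := by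
  have hsub : (A : Set G) * (B : Set G) * (N : Set G) ⊆ (A : Set G) * (B : Set G) := by
    rintro x ⟨y, hy, n, hn, rfl⟩
    obtain ⟨a, ha, b, hb, rfl⟩ := hy
    obtain ⟨c, hc, d, hd, rfl⟩ := hN hn
    refine ⟨a * (b * c * b⁻¹), ?_, b * d, ?_, ?_⟩
    · exact mul_mem ha (A.normalCore_le ((A.normalCore_normal).conj_mem c hc b))
    · exact mul_mem hb (B.normalCore_le hd)
    · group
  constructor
  · intro h hEq
    exact h (Set.eq_univ_of_univ_subset (hEq ▸ hsub))
  · intro h hEq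
    apply h
    apply Set.eq_univ_of_univ_subset
    intro g _
    have : g ∈ (A : Set G) * (B : Set G) := hEq ▸ trivial
    simpa using Set.mul_mem_mul this N.one_mem
end

section
/- Let G be a finite group with subgroups A, B such that G = ABA, and let H be a subgroup with A ≤ H ≤ G. Then H = A(B∩H)A. Moreover, when A < H, the restricted triple factorisation (H, A, B∩H) is degenerate (i.e. H = A(B∩H)) if and only if H ⊆ AB. -/
open scoped Pointwise

/-- Restriction to an overgroup of `A`: if `G = ABA` and `A ≤ H ≤ G`, then
`H = A(B ∩ H)A`; moreover for `A < H`, the restriction is degenerate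
(`H = A(B ∩ H)`) iff `H ⊆ AB`. -/
theorem restriction_to_overgroup
    (G : Type*) [Group G] [Fintype G] (A B H : Subgroup G) (hAH : A ≤ H)
    (hABA : (A : Set G) * (B : Set G) * (A : Set G) = Set.univ) :
    (H : Set G) = (A : Set G) * ((B ⊓ H : Subgroup G) : Set G) * (A : Set G) ∧
      (A < H →
        ((H : Set G) = (A : Set G) * ((B ⊓ H : Subgroup G) : Set G) ↔
          (H : Set G) ⊆ (A : Set G) * (B : Set G))) := by
  constructor
  · apply Set.Subset.antisymm
    · intro h hh
      have : h ∈ (A : Set G) * (B : Set G) * (A : Set G) := by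
        rw [hABA]; trivial
      obtain ⟨ab, ⟨a, ha, b, hb, rfl⟩, a', ha', rfl⟩ := this
      have hbH : b ∈ H := by
        have : b = a⁻¹ * (a * b * a') * a'⁻¹ := by group
        rw [this]
        exact H.mul_mem (H.mul_mem (H.inv_mem (hAH ha)) hh) (H.inv_mem (hAH ha'))
      exact ⟨a * b, ⟨a, ha, b, ⟨hb, hbH⟩, rfl⟩, a', ha', rfl⟩
    · rintro x ⟨ab, ⟨a, ha, b, hb, rfl⟩, a', ha', rfl⟩
      exact H.mul_mem (H.mul_mem (hAH ha) hb.2) (hAH ha')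
  · intro _
    constructor
    · intro he
      rw [he]
      exact Set.mul_subset_mul_left (fun x hx => hx.1)
    · intro hsub
      apply Set.Subset.antisymm
      · intro h hh
        obtain ⟨a, ha, b, hb, rfl⟩ := hsub hh
        have hbH : b ∈ H := by
          have : b = a⁻¹ * (a * b) := by group
          rw [this]
          exact H.mul_mem (H.inv_mem (hAH ha)) hh
        exact ⟨a, ha, b, ⟨hb, hbH⟩, rfl⟩
      · rintro x ⟨a, ha, b, hb, rfl⟩
        exact H.mul_mem (hAH ha) hb.2
end

section
/- Let G be a finite group, A ≤ G a subgroup, S ⊆ G a subset with G = ASA, and H ≤ G. Then A ≤ H if and only if H = A(S∩H)A. -/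
open scoped Pointwise

/-- If `G = ASA` for a subgroup `A` and a subset `S`, and `H ≤ G`, then
`A ≤ H` iff `H = A(S ∩ H)A`. -/
theorem le_iff_restriction_factorisation
    (G : Type*) [Group G] [Fintype G] (A H : Subgroup G) (S : Set G)
    (hASA : (A : Set G) * S * (A : Set G) = Set.univ) :
    A ≤ H ↔ (H : Set G) = (A : Set G) * (S ∩ (H : Set G)) * (A : Set G) := by
  constructor
  · intro hAH
    ext h
    constructor
    · intro hh
      have : h ∈ (A : Set G) * S * (A : Set G) := by rw [hASA]; trivial
      obtain ⟨x, hx, a2, ha2, hprod⟩ := this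
      obtain ⟨a1, ha1, s, hs, hx⟩ := hx
      subst hx hprod
      refine ⟨a1 * s, ⟨a1, ha1, s, ⟨hs, ?_⟩, rfl⟩, a2, ha2, rfl⟩
      have : s = a1⁻¹ * (a1 * s * a2) * a2⁻¹ := by group
      rw [this]
      exact mul_mem (mul_mem (inv_mem (hAH ha1)) hh) (inv_mem (hAH ha2))
    · rintro ⟨x, ⟨a1, ha1, s, ⟨hsS, hsH⟩, rfl⟩, a2, ha2, rfl⟩
      exact mul_mem (mul_mem (hAH ha1) hsH) (hAH ha2)
  · intro hEq a ha
    have h1 : (1 : G) ∈ (H : Set G) := H.one_mem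
    rw [hEq] at h1
    obtain ⟨x, ⟨a1, ha1, s, hs, rfl⟩, a2, ha2, h1⟩ := h1
    have : a ∈ (A : Set G) * (S ∩ (H : Set G)) * (A : Set G) := by
      refine ⟨a * a1 * s, ⟨a * a1, mul_mem ha ha1, s, hs, rfl⟩, a2, ha2, ?_⟩
      simp only at h1 ⊢
      calc a * a1 * s * a2 = a * (a1 * s * a2) := by group
        _ = a := by rw [h1]; group
    rw [← hEq] at this
    exact this
end

section
/- Let G be a finite group with subgroups A, B such that G = ABA and G ≠ AB, and let N ⊴ G with N ⊄ A. Then at least one of the following holds: (i) G ≠ ABN (the quotient modulo N is nondegenerate), or (ii) AN ⊄ AB, i.e. AN = A(B∩AN)A is a nondegenerate triple factorisation of AN. -/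
open scoped Pointwise

/-- If `G = ABA` is nondegenerate and `N ⊴ G` with `N ≰ A`, then either the
quotient modulo `N` is nondegenerate (`G ≠ ABN`), or the restriction to `AN`
is nondegenerate (`AN ⊄ AB`). -/
theorem quotient_or_restriction_nondegenerate
    (G : Type*) [Group G] [Fintype G] (A B N : Subgroup G) [N.Normal]
    (hABA : (A : Set G) * (B : Set G) * (A : Set G) = Set.univ)
    (hAB : (A : Set G) * (B : Set G) ≠ Set.univ)
    (hNA : ¬ N ≤ A) :
    (A : Set G) * (B : Set G) * (N : Set G) ≠ Set.univ ∨
      ¬ ((A : Set G) * (N : Set G) ⊆ (A : Set G) * (B : Set G)) := by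
  by_contra h
  push_neg at h
  obtain ⟨h1, h2⟩ := h
  apply hAB
  apply Set.eq_univ_of_univ_subset
  rw [← h1]
  rintro g ⟨ab, hab, n, hn, rfl⟩
  obtain ⟨a, ha, b, hb, rfl⟩ := hab
  have hn' : b * n * b⁻¹ ∈ N := ‹N.Normal›.conj_mem n hn b
  have : a * (b * n * b⁻¹) ∈ (A : Set G) * (N : Set G) :=
    ⟨a, ha, b * n * b⁻¹, hn', rfl⟩
  obtain ⟨a', ha', b', hb', heq⟩ := h2 this
  have heq' : a' * b' = a * (b * n * b⁻¹) := heq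
  show a * b * n ∈ (A : Set G) * (B : Set G)
  have h3 : a * b * n = a' * (b' * b) := by
    have : a * b * n = a * (b * n * b⁻¹) * b := by group
    rw [this, ← heq', mul_assoc]
  rw [h3]
  exact ⟨a', ha', b' * b, mul_mem hb' hb, rfl⟩
end

section
/- Let G = A_5, A = ⟨(1,2,3,4,5)⟩, and B = ⟨(1,3)(2,5), (1,2)(3,5)⟩ (a Klein four-subgroup). Then G = ABA and G ≠ AB. -/
set_option maxRecDepth 10000

open scoped Pointwise

namespace A5TF

def r : Equiv.Perm (Fin 5) := finRotate 5
def x : Equiv.Perm (Fin 5) := Equiv.swap 0 2 * Equiv.swap 1 4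
def y : Equiv.Perm (Fin 5) := Equiv.swap 0 1 * Equiv.swap 2 4

def SA : Finset (Equiv.Perm (Fin 5)) := {1, r, r^2, r^3, r^4}
def SB : Finset (Equiv.Perm (Fin 5)) := {1, x, y, x*y}
def SG : Finset (Equiv.Perm (Fin 5)) :=
  Finset.univ.filter fun g => Equiv.Perm.sign g = 1

lemma SA_mul : ∀ a ∈ SA, ∀ b ∈ SA, a * b ∈ SA := by decide
lemma SA_inv : ∀ a ∈ SA, a⁻¹ ∈ SA := by decide
lemma SB_mul : ∀ a ∈ SB, ∀ b ∈ SB, a * b ∈ SB := by decide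
lemma SB_inv : ∀ a ∈ SB, a⁻¹ ∈ SB := by decide

def A' : Subgroup (Equiv.Perm (Fin 5)) where
  carrier := ↑SA
  one_mem' := by decide
  mul_mem' := fun ha hb => SA_mul _ ha _ hb
  inv_mem' := fun ha => SA_inv _ ha

def B' : Subgroup (Equiv.Perm (Fin 5)) where
  carrier := ↑SB
  one_mem' := by decide
  mul_mem' := fun ha hb => SB_mul _ ha _ hb
  inv_mem' := fun ha => SB_inv _ ha

lemma closureA : Subgroup.closure {(finRotate 5 : Equiv.Perm (Fin 5))} = A' := by
  apply le_antisymm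
  · rw [Subgroup.closure_le]
    intro g hg
    rcases hg with rfl
    show r ∈ SA; decide
  · intro g hg
    have hr : r ∈ Subgroup.closure {(finRotate 5 : Equiv.Perm (Fin 5))} :=
      Subgroup.subset_closure rfl
    have : g ∈ SA := hg
    simp only [SA, Finset.mem_insert, Finset.mem_singleton] at this
    rcases this with rfl | rfl | rfl | rfl | rfl
    · exact one_mem _
    · exact hr
    · exact pow_mem hr 2
    · exact pow_mem hr 3
    · exact pow_mem hr 4

lemma closureB : Subgroup.closure
      {Equiv.swap (0 : Fin 5) 2 * Equiv.swap (1 : Fin 5) 4,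
       Equiv.swap (0 : Fin 5) 1 * Equiv.swap (2 : Fin 5) 4} = B' := by
  apply le_antisymm
  · rw [Subgroup.closure_le]
    intro g hg
    rcases hg with rfl | rfl
    · show x ∈ SB; decide
    · show y ∈ SB; decide
  · intro g hg
    have hx : x ∈ Subgroup.closure
        ({Equiv.swap (0 : Fin 5) 2 * Equiv.swap (1 : Fin 5) 4,
         Equiv.swap (0 : Fin 5) 1 * Equiv.swap (2 : Fin 5) 4} :
         Set (Equiv.Perm (Fin 5))) :=
      Subgroup.subset_closure (Or.inl rfl)
    have hy : y ∈ Subgroup.closure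
        ({Equiv.swap (0 : Fin 5) 2 * Equiv.swap (1 : Fin 5) 4,
         Equiv.swap (0 : Fin 5) 1 * Equiv.swap (2 : Fin 5) 4} :
         Set (Equiv.Perm (Fin 5))) :=
      Subgroup.subset_closure (Or.inr rfl)
    have : g ∈ SB := hg
    simp only [SB, Finset.mem_insert, Finset.mem_singleton] at this
    rcases this with rfl | rfl | rfl | rfl
    · exact one_mem _
    · exact hx
    · exact hy
    · exact mul_mem hx hy

lemma key1 : SG = SA * SB * SA := by decide
lemma key2 : SG ≠ SA * SB := by decide

lemma altG : (alternatingGroup (Fin 5) : Set (Equiv.Perm (Fin 5))) = ↑SG := by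
  ext g
  simp [SG, Equiv.Perm.mem_alternatingGroup]

end A5TF

/-- In `G = A₅` with `A = ⟨(1,2,3,4,5)⟩` and `B` the Klein four-subgroup
`⟨(1,3)(2,5),(1,2)(3,5)⟩`: `G = ABA` and `G ≠ AB`, a nondegenerate triple
factorisation. -/
theorem alternating5_nondegenerate_triple_factorisation
    (A B : Subgroup (Equiv.Perm (Fin 5)))
    (hA : A = Subgroup.closure {(finRotate 5 : Equiv.Perm (Fin 5))})
    (hB : B = Subgroup.closure
      {Equiv.swap (0 : Fin 5) 2 * Equiv.swap (1 : Fin 5) 4,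
       Equiv.swap (0 : Fin 5) 1 * Equiv.swap (2 : Fin 5) 4}) :
    (alternatingGroup (Fin 5) : Set (Equiv.Perm (Fin 5))) =
        (A : Set (Equiv.Perm (Fin 5))) * (B : Set (Equiv.Perm (Fin 5))) *
          (A : Set (Equiv.Perm (Fin 5))) ∧
      (alternatingGroup (Fin 5) : Set (Equiv.Perm (Fin 5))) ≠
        (A : Set (Equiv.Perm (Fin 5))) * (B : Set (Equiv.Perm (Fin 5))) := by
  have hAs : (A : Set (Equiv.Perm (Fin 5))) = ↑A5TF.SA := by
    rw [hA, A5TF.closureA]; rfl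
  have hBs : (B : Set (Equiv.Perm (Fin 5))) = ↑A5TF.SB := by
    rw [hB, A5TF.closureB]; rfl
  rw [A5TF.altG, hAs, hBs, ← Finset.coe_mul, ← Finset.coe_mul]
  constructor
  · exact congrArg _ A5TF.key1
  · intro h
    exact A5TF.key2 (Finset.coe_injective h)
end

section
/- Let G_0, G_1 be finite groups with subgroups A_0, B_0 ≤ G_0 and A_1, B_1 ≤ G_1, let ℓ = |G_1 : A_1|, W = G_0 ≀ G_1 = G_0^ℓ ⋊ G_1 (with G_1 permuting coordinates via its action on the cosets of A_1), Â = (A_0 × G_0^{ℓ−1}) ⋊ A_1 and B̂ = B_0^ℓ ⋊ B_1. Then Â·B̂ = (A_0B_0 × G_0^{ℓ−1})·(A_1B_1) as subsets of W. -/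
open scoped Pointwise

section Wreath

variable {G₀ G₁ : Type*} [Group G₀] [Group G₁]

/-- The automorphism of `(G₁ ⧸ A₁) → G₀` permuting coordinates by `σ`. -/
def wreathAut (G₀ : Type*) [Group G₀] {G₁ : Type*} [Group G₁] (A₁ : Subgroup G₁)
    (σ : G₁) : MulAut ((G₁ ⧸ A₁) → G₀) where
  toFun f := fun x => f (σ⁻¹ • x)
  invFun f := fun x => f (σ • x)
  left_inv f := by funext x; simp
  right_inv f := by funext x; simp
  map_mul' f g := rfl

/-- The coordinate-permutation action of `G₁` on `(G₁ ⧸ A₁) → G₀`, as a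
homomorphism into the automorphism group; this defines the wreath product
`G₀ ≀ G₁ = ((G₁ ⧸ A₁) → G₀) ⋊[wreathPhi G₀ A₁] G₁`. -/
def wreathPhi (G₀ : Type*) [Group G₀] {G₁ : Type*} [Group G₁] (A₁ : Subgroup G₁) :
    G₁ →* MulAut ((G₁ ⧸ A₁) → G₀) where
  toFun := wreathAut G₀ A₁
  map_one' := by ext f x; simp [wreathAut]
  map_mul' σ τ := by ext f x; simp [wreathAut, mul_smul]

lemma wreath_smul_pt {A₁ : Subgroup G₁} {σ : G₁} (h : σ ∈ A₁) :
    σ • ((1 : G₁) : G₁ ⧸ A₁) = ((1 : G₁) : G₁ ⧸ A₁) := by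
  rw [MulAction.Quotient.smul_mk]
  exact QuotientGroup.eq.mpr (by simpa using A₁.inv_mem h)

/-- The subgroup `Â = (A₀ × G₀^{ℓ-1}) ⋊ A₁` of the wreath product:
top component in `A₁`, and the coordinate at the base point `A₁ ∈ G₁ ⧸ A₁`
in `A₀`. -/
def wreathAhat (A₀ : Subgroup G₀) (A₁ : Subgroup G₁) :
    Subgroup (((G₁ ⧸ A₁) → G₀) ⋊[wreathPhi G₀ A₁] G₁) where
  carrier := {w | w.right ∈ A₁ ∧ w.left ((1 : G₁) : G₁ ⧸ A₁) ∈ A₀}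
  one_mem' := by
    refine ⟨A₁.one_mem, ?_⟩
    simp [SemidirectProduct.one_left]
  mul_mem' := by
    rintro a b ⟨ha1, ha2⟩ ⟨hb1, hb2⟩
    refine ⟨A₁.mul_mem ha1 hb1, ?_⟩
    rw [SemidirectProduct.mul_left]
    have : (wreathPhi G₀ A₁ a.right) b.left ((1 : G₁) : G₁ ⧸ A₁)
        = b.left ((1 : G₁) : G₁ ⧸ A₁) := by
      show b.left (a.right⁻¹ • ((1 : G₁) : G₁ ⧸ A₁)) = _
      rw [wreath_smul_pt (A₁.inv_mem ha1)]
    rw [Pi.mul_apply, this]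
    exact A₀.mul_mem ha2 hb2
  inv_mem' := by
    rintro a ⟨ha1, ha2⟩
    refine ⟨A₁.inv_mem ha1, ?_⟩
    rw [SemidirectProduct.inv_left]
    show a.left⁻¹ (a.right⁻¹⁻¹ • ((1 : G₁) : G₁ ⧸ A₁)) ∈ A₀
    rw [inv_inv, wreath_smul_pt ha1, Pi.inv_apply]
    exact A₀.inv_mem ha2

/-- The subgroup `B̂ = B₀ ≀ B₁ = B₀^ℓ ⋊ B₁` of the wreath product. -/
def wreathBhat (B₀ : Subgroup G₀) (A₁ B₁ : Subgroup G₁) :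
    Subgroup (((G₁ ⧸ A₁) → G₀) ⋊[wreathPhi G₀ A₁] G₁) where
  carrier := {w | w.right ∈ B₁ ∧ ∀ x, w.left x ∈ B₀}
  one_mem' := ⟨B₁.one_mem, fun x => by simp [SemidirectProduct.one_left]⟩
  mul_mem' := by
    rintro a b ⟨ha1, ha2⟩ ⟨hb1, hb2⟩
    refine ⟨B₁.mul_mem ha1 hb1, fun x => ?_⟩
    rw [SemidirectProduct.mul_left, Pi.mul_apply]
    exact B₀.mul_mem (ha2 x) (hb2 _)
  inv_mem' := by
    rintro a ⟨ha1, ha2⟩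
    refine ⟨B₁.inv_mem ha1, fun x => ?_⟩
    rw [SemidirectProduct.inv_left]
    show a.left⁻¹ (a.right⁻¹⁻¹ • x) ∈ B₀
    rw [Pi.inv_apply]
    exact B₀.inv_mem (ha2 _)

end Wreath

/-!
Since `A₁` fixes the base point, the base coordinate of `a * b` with `a ∈ Â` is the product of
the base coordinates of `a` and `b`; this gives `ÂB̂ ⊆ (A₀B₀ × G₀^{ℓ−1})(A₁B₁)`. Conversely, if `w`
has base coordinate `a₀b₀` and top component `a₁b₁`, dividing it on the right by the constant
element `(b₀, …, b₀; b₁) ∈ B̂` lands in `Â`.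
-/

section WreathProduct

variable {G₀ G₁ : Type*} [Group G₀] [Group G₁] {A₁ : Subgroup G₁}

theorem wreath_mul_left_apply_one_of_right_mem
    {a b : ((G₁ ⧸ A₁) → G₀) ⋊[wreathPhi G₀ A₁] G₁} (ha : a.right ∈ A₁) :
    (a * b).left ((1 : G₁) : G₁ ⧸ A₁) =
      a.left ((1 : G₁) : G₁ ⧸ A₁) * b.left ((1 : G₁) : G₁ ⧸ A₁) := by
  show _ * b.left (a.right⁻¹ • _) = _
  rw [wreath_smul_pt (A₁.inv_mem ha)]

theorem wreath_mul_inv_mk_const_left (w : ((G₁ ⧸ A₁) → G₀) ⋊[wreathPhi G₀ A₁] G₁)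
    (g : G₀) (σ : G₁) (x : G₁ ⧸ A₁) :
    (w * ⟨fun _ => g, σ⟩⁻¹).left x = w.left x * g⁻¹ :=
  rfl

end WreathProduct

theorem wreath_Ahat_mul_Bhat_general
    {G₀ G₁ : Type*} [Group G₀] [Group G₁]
    (A₀ B₀ : Subgroup G₀) (A₁ B₁ : Subgroup G₁) :
    (wreathAhat A₀ A₁ : Set (((G₁ ⧸ A₁) → G₀) ⋊[wreathPhi G₀ A₁] G₁)) *
        (wreathBhat B₀ A₁ B₁ : Set (((G₁ ⧸ A₁) → G₀) ⋊[wreathPhi G₀ A₁] G₁)) =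
      {w : ((G₁ ⧸ A₁) → G₀) ⋊[wreathPhi G₀ A₁] G₁ |
        w.left ((1 : G₁) : G₁ ⧸ A₁) ∈ (A₀ : Set G₀) * (B₀ : Set G₀) ∧
        w.right ∈ (A₁ : Set G₁) * (B₁ : Set G₁)} := by
  ext w
  constructor
  · rintro ⟨a, ⟨ha₁, ha₀⟩, b, ⟨hb₁, hb₀⟩, rfl⟩
    refine ⟨?_, Set.mul_mem_mul ha₁ hb₁⟩
    rw [wreath_mul_left_apply_one_of_right_mem ha₁]
    exact Set.mul_mem_mul ha₀ (hb₀ _)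
  · rintro ⟨⟨a₀, ha₀, b₀, hb₀, h₀⟩, ⟨a₁, ha₁, b₁, hb₁, h₁⟩⟩
    let b : ((G₁ ⧸ A₁) → G₀) ⋊[wreathPhi G₀ A₁] G₁ := ⟨fun _ => b₀, b₁⟩
    refine ⟨w * b⁻¹, ⟨?_, ?_⟩, b, ⟨hb₁, fun _ => hb₀⟩, inv_mul_cancel_right w b⟩
    · rwa [SemidirectProduct.mul_right, SemidirectProduct.inv_right, ← h₁, mul_inv_cancel_right]
    · rwa [wreath_mul_inv_mk_const_left, ← h₀, mul_inv_cancel_right]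

/-- `Â·B̂ = (A₀B₀ × G₀^{ℓ−1})·(A₁B₁)`: the product set `ÂB̂` in the wreath
product `W = G₀ ≀ G₁` consists exactly of the elements whose top component
lies in `A₁B₁` and whose coordinate at the base point lies in `A₀B₀`. -/
theorem wreath_Ahat_mul_Bhat
    {G₀ G₁ : Type*} [Group G₀] [Group G₁] [Fintype G₀] [Fintype G₁]
    (A₀ B₀ : Subgroup G₀) (A₁ B₁ : Subgroup G₁) :
    (wreathAhat A₀ A₁ : Set (((G₁ ⧸ A₁) → G₀) ⋊[wreathPhi G₀ A₁] G₁)) *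
        (wreathBhat B₀ A₁ B₁ : Set (((G₁ ⧸ A₁) → G₀) ⋊[wreathPhi G₀ A₁] G₁)) =
      {w : ((G₁ ⧸ A₁) → G₀) ⋊[wreathPhi G₀ A₁] G₁ |
        w.left ((1 : G₁) : G₁ ⧸ A₁) ∈ (A₀ : Set G₀) * (B₀ : Set G₀) ∧
        w.right ∈ (A₁ : Set G₁) * (B₁ : Set G₁)} :=
  wreath_Ahat_mul_Bhat_general A₀ B₀ A₁ B₁
end

section
/- With W = G_0 ≀ G_1, Â = (A_0 × G_0^{ℓ−1}) ⋊ A_1, B̂ = B_0 ≀ B_1 as above: if G_0 = A_0B_0A_0 and G_1 = A_1B_1A_1, then W = ÂB̂Â. -/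
/-! Factor the top component as `σ = a b c` in `A₁B₁A₁` and every coordinate as
`f x = α x * β x * γ x` in `A₀B₀A₀`. Permuting the coordinates of `β` by `a⁻¹` and those of `γ`
by `(a b)⁻¹` lets them pass the top factors, so `(f, σ) = (α, a) (β', b) (γ', c)`. Since all
coordinates of `α` and `γ'` lie in `A₀`, even `W = (A₀ ≀ A₁)(B₀ ≀ B₁)(A₀ ≀ A₁)`. -/
open scoped Pointwise

theorem Set.univ_pi_mul_univ_pi {ι : Type*} {M : ι → Type*} [∀ i, Mul (M i)]
    (s t : ∀ i, Set (M i)) : univ.pi s * univ.pi t = univ.pi fun i => s i * t i := by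
  ext f
  simp only [mem_mul, mem_univ_pi]
  constructor
  · rintro ⟨g, hg, h, hh, rfl⟩ i
    exact ⟨g i, hg i, h i, hh i, rfl⟩
  · intro hf
    choose g hg h hh hgh using hf
    exact ⟨g, hg, h, hh, funext hgh⟩

theorem SemidirectProduct.mk_mul_mul_eq {N G : Type*} [Group N] [Group G] {φ : G →* MulAut N}
    (α β γ : N) (a b c : G) :
    (⟨α * β * γ, a * b * c⟩ : N ⋊[φ] G) = ⟨α, a⟩ * ⟨φ a⁻¹ β, b⟩ * ⟨φ (a * b)⁻¹ γ, c⟩ := by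
  ext <;> simp [mul_assoc]

theorem wreath_triple_factorisation_general
    {G₀ G₁ : Type*} [Group G₀] [Group G₁]
    (A₀ B₀ : Subgroup G₀) (A₁ B₁ : Subgroup G₁)
    (h0 : (A₀ : Set G₀) * (B₀ : Set G₀) * (A₀ : Set G₀) = Set.univ)
    (h1 : (A₁ : Set G₁) * (B₁ : Set G₁) * (A₁ : Set G₁) = Set.univ) :
    (wreathAhat A₀ A₁ : Set (((G₁ ⧸ A₁) → G₀) ⋊[wreathPhi G₀ A₁] G₁)) *
        (wreathBhat B₀ A₁ B₁ : Set (((G₁ ⧸ A₁) → G₀) ⋊[wreathPhi G₀ A₁] G₁)) *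
        (wreathAhat A₀ A₁ : Set (((G₁ ⧸ A₁) → G₀) ⋊[wreathPhi G₀ A₁] G₁)) =
      Set.univ := by
  refine Set.eq_univ_of_forall fun ⟨f, σ⟩ => ?_
  obtain ⟨_, ⟨a, ha, b, hb, rfl⟩, c, hc, rfl⟩ := h1 ▸ Set.mem_univ σ
  have hf : f ∈ Set.univ.pi (fun _ => (A₀ : Set G₀)) * Set.univ.pi (fun _ => (B₀ : Set G₀)) *
      Set.univ.pi (fun _ => (A₀ : Set G₀)) := by
    simp only [Set.univ_pi_mul_univ_pi, h0, Set.pi_univ, Set.mem_univ]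
  obtain ⟨_, ⟨α, hα, β, hβ, rfl⟩, γ, hγ, rfl⟩ := hf
  rw [SemidirectProduct.mk_mul_mul_eq]
  exact Set.mul_mem_mul (Set.mul_mem_mul ⟨ha, hα _ trivial⟩ ⟨hb, fun _ => hβ _ trivial⟩)
    ⟨hc, hγ _ trivial⟩

/-- Wreath products of triple factorisations: if `G₀ = A₀B₀A₀` and
`G₁ = A₁B₁A₁`, then `W = ÂB̂Â` in the wreath product `W = G₀ ≀ G₁`. -/
theorem wreath_triple_factorisation
    {G₀ G₁ : Type*} [Group G₀] [Group G₁] [Fintype G₀] [Fintype G₁]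
    (A₀ B₀ : Subgroup G₀) (A₁ B₁ : Subgroup G₁)
    (h0 : (A₀ : Set G₀) * (B₀ : Set G₀) * (A₀ : Set G₀) = Set.univ)
    (h1 : (A₁ : Set G₁) * (B₁ : Set G₁) * (A₁ : Set G₁) = Set.univ) :
    (wreathAhat A₀ A₁ : Set (((G₁ ⧸ A₁) → G₀) ⋊[wreathPhi G₀ A₁] G₁)) *
        (wreathBhat B₀ A₁ B₁ : Set (((G₁ ⧸ A₁) → G₀) ⋊[wreathPhi G₀ A₁] G₁)) *
        (wreathAhat A₀ A₁ : Set (((G₁ ⧸ A₁) → G₀) ⋊[wreathPhi G₀ A₁] G₁)) =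
      Set.univ :=
  wreath_triple_factorisation_general A₀ B₀ A₁ B₁ h0 h1
end

section
/- With W, Â, B̂ as above: the wreath triple factorisation (W, Â, B̂) is nondegenerate (W ≠ ÂB̂) if and only if at least one of G_0 ≠ A_0B_0 or G_1 ≠ A_1B_1 holds. -/
/-!
The top projection `W → G₁` is a homomorphism carrying `Â` into `A₁` and `B̂` into `B₁`, and
since `A₁` fixes the base point, the base-point coordinate is multiplicative on products `âb̂`;
so `ÂB̂ = W` forces `A₀B₀ = G₀` and `A₁B₁ = G₁`. Conversely, `ÂB̂ = (A₀B₀ × G₀^{ℓ-1})(A₁B₁)`.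
-/

open scoped Pointwise

section WreathFactorisation

variable {G₀ G₁ : Type*} [Group G₀] [Group G₁] {A₀ B₀ : Subgroup G₀} {A₁ B₁ : Subgroup G₁}

local notation "W" => ((G₁ ⧸ A₁) → G₀) ⋊[wreathPhi G₀ A₁] G₁
local notation "pt" => ((1 : G₁) : G₁ ⧸ A₁)

theorem mul_left_pt_of_mem_wreathAhat {a : W} (ha : a ∈ wreathAhat A₀ A₁) (b : W) :
    (a * b).left pt = a.left pt * b.left pt := by
  change a.left pt * b.left (a.right⁻¹ • pt) = _
  rw [wreath_smul_pt (A₁.inv_mem ha.1)]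

theorem base_mul_eq_univ_of_wreathAhat_mul_wreathBhat_eq_univ
    (h : (wreathAhat A₀ A₁ : Set W) * (wreathBhat B₀ A₁ B₁ : Set W) = Set.univ) :
    (A₀ : Set G₀) * (B₀ : Set G₀) = Set.univ := by
  refine Set.eq_univ_of_forall fun g₀ => ?_
  obtain ⟨a, ha, b, hb, hab⟩ := h.symm ▸ Set.mem_univ (⟨fun _ => g₀, 1⟩ : W)
  exact ⟨a.left pt, ha.2, b.left pt, hb.2 pt,
    (mul_left_pt_of_mem_wreathAhat ha b).symm.trans (congrArg (fun w : W => w.left pt) hab)⟩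

theorem top_mul_eq_univ_of_wreathAhat_mul_wreathBhat_eq_univ
    (h : (wreathAhat A₀ A₁ : Set W) * (wreathBhat B₀ A₁ B₁ : Set W) = Set.univ) :
    (A₁ : Set G₁) * (B₁ : Set G₁) = Set.univ := by
  refine Set.eq_univ_of_univ_subset ?_
  calc Set.univ = SemidirectProduct.rightHom '' (Set.univ : Set W) :=
        (Set.image_univ_of_surjective
          (SemidirectProduct.rightHom_surjective (φ := wreathPhi G₀ A₁))).symm
    _ ⊆ _ := by
        rw [← h, Set.image_mul]
        exact Set.mul_subset_mul (Set.image_subset_iff.2 fun _ hw => hw.1)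
          (Set.image_subset_iff.2 fun _ hw => hw.1)

/-- Split `w.right = a₁ b₁` and `w.left pt = a₀ b₀`; then `c = (b₀⁻¹, …, b₀⁻¹; b₁⁻¹) ∈ B̂`, and
`w c ∈ Â` because the coordinate permutation by `w.right` fixes the constant function `b₀⁻¹`. -/
theorem wreathAhat_mul_wreathBhat_eq_univ (h₀ : (A₀ : Set G₀) * (B₀ : Set G₀) = Set.univ)
    (h₁ : (A₁ : Set G₁) * (B₁ : Set G₁) = Set.univ) :
    (wreathAhat A₀ A₁ : Set W) * (wreathBhat B₀ A₁ B₁ : Set W) = Set.univ := by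
  refine Set.eq_univ_of_forall fun w => ?_
  obtain ⟨a₁, ha₁, b₁, hb₁, hab₁⟩ := h₁.symm ▸ Set.mem_univ w.right
  obtain ⟨a₀, ha₀, b₀, hb₀, hab₀⟩ := h₀.symm ▸ Set.mem_univ (w.left pt)
  let c : W := ⟨fun _ => b₀⁻¹, b₁⁻¹⟩
  have hc : c ∈ wreathBhat B₀ A₁ B₁ := ⟨B₁.inv_mem hb₁, fun _ => B₀.inv_mem hb₀⟩
  refine ⟨w * c, ⟨?_, ?_⟩, c⁻¹, (wreathBhat B₀ A₁ B₁).inv_mem hc, mul_inv_cancel_right w c⟩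
  · change w.right * b₁⁻¹ ∈ A₁
    rwa [← hab₁, mul_inv_cancel_right]
  · change w.left pt * b₀⁻¹ ∈ A₀
    rwa [← hab₀, mul_inv_cancel_right]

end WreathFactorisation

theorem wreath_nondegenerate_iff_general
    {G₀ G₁ : Type*} [Group G₀] [Group G₁]
    (A₀ B₀ : Subgroup G₀) (A₁ B₁ : Subgroup G₁) :
    (wreathAhat A₀ A₁ : Set (((G₁ ⧸ A₁) → G₀) ⋊[wreathPhi G₀ A₁] G₁)) *
        (wreathBhat B₀ A₁ B₁ : Set (((G₁ ⧸ A₁) → G₀) ⋊[wreathPhi G₀ A₁] G₁)) ≠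
        Set.univ ↔
      (A₀ : Set G₀) * (B₀ : Set G₀) ≠ Set.univ ∨
        (A₁ : Set G₁) * (B₁ : Set G₁) ≠ Set.univ := by
  rw [Ne, Ne, Ne, ← not_and_or, not_iff_not]
  exact ⟨fun h => ⟨base_mul_eq_univ_of_wreathAhat_mul_wreathBhat_eq_univ h,
      top_mul_eq_univ_of_wreathAhat_mul_wreathBhat_eq_univ h⟩,
    fun h => wreathAhat_mul_wreathBhat_eq_univ h.1 h.2⟩

/-- Nondegeneracy of the wreath triple factorisation: `W ≠ ÂB̂` iff
`G₀ ≠ A₀B₀` or `G₁ ≠ A₁B₁`. -/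
theorem wreath_nondegenerate_iff
    {G₀ G₁ : Type*} [Group G₀] [Group G₁] [Fintype G₀] [Fintype G₁]
    (A₀ B₀ : Subgroup G₀) (A₁ B₁ : Subgroup G₁) :
    (wreathAhat A₀ A₁ : Set (((G₁ ⧸ A₁) → G₀) ⋊[wreathPhi G₀ A₁] G₁)) *
        (wreathBhat B₀ A₁ B₁ : Set (((G₁ ⧸ A₁) → G₀) ⋊[wreathPhi G₀ A₁] G₁)) ≠
        Set.univ ↔
      (A₀ : Set G₀) * (B₀ : Set G₀) ≠ Set.univ ∨
        (A₁ : Set G₁) * (B₁ : Set G₁) ≠ Set.univ :=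
  wreath_nondegenerate_iff_general A₀ B₀ A₁ B₁
end

section
/- Let G be a finite group with subgroups A, B such that G = ABA and G ≠ AB, with core_G(A) = 1 and A maximal in G. Then AB contains no nontrivial normal subgroup of G; in particular core_G(B) = 1. -/
open scoped Pointwise

/-- If `G = ABA` is nondegenerate (`G ≠ AB`), `core_G(A) = 1` and `A` is a
maximal subgroup of `G`, then `AB` contains no nontrivial normal subgroup of
`G`; in particular `core_G(B) = 1`. -/
theorem primitive_AB_contains_no_normal_subgroup
    (G : Type*) [Group G] [Fintype G] (A B : Subgroup G)
    (hABA : (A : Set G) * (B : Set G) * (A : Set G) = Set.univ)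
    (hAB : (A : Set G) * (B : Set G) ≠ Set.univ)
    (hcore : A.normalCore = ⊥) (hmax : IsCoatom A) :
    (∀ N : Subgroup G, N.Normal → (N : Set G) ⊆ (A : Set G) * (B : Set G) → N = ⊥) ∧
      B.normalCore = ⊥ := by
  have key : ∀ N : Subgroup G, N.Normal → (N : Set G) ⊆ (A : Set G) * (B : Set G) → N = ⊥ := by
    intro N hN hNsub
    by_contra hne
    -- N is not contained in A (else N ≤ normalCore A = ⊥)
    have hNA : ¬ N ≤ A := by
      intro hle
      exact hne (le_bot_iff.mp (by
        have := Subgroup.normalCore_mono hle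
        rwa [hcore, @Subgroup.normalCore_eq_self _ _ N hN] at this))
    have hlt : A < A ⊔ N := lt_of_le_of_ne le_sup_left (fun h => hNA (h ▸ le_sup_right))
    have htop : A ⊔ N = ⊤ := hmax.2 _ hlt
    have : (Set.univ : Set G) ⊆ (A : Set G) * (B : Set G) := by
      calc (Set.univ : Set G) = ((⊤ : Subgroup G) : Set G) := by simp
        _ = ((A ⊔ N : Subgroup G) : Set G) := by rw [htop]
        _ = (A : Set G) * (N : Set G) := Subgroup.mul_normal A N
        _ ⊆ (A : Set G) * ((A : Set G) * (B : Set G)) := Set.mul_subset_mul_left hNsub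
        _ = (A : Set G) * (A : Set G) * (B : Set G) := (mul_assoc _ _ _).symm
        _ = (A : Set G) * (B : Set G) := by rw [show (A : Set G) * (A : Set G) = (A : Set G) from A.toSubmonoid.coe_mul_self_eq]
    exact hAB (Set.eq_univ_of_univ_subset this)
  refine ⟨key, key _ (Subgroup.normalCore_normal B) ?_⟩
  intro x hx
  simpa using Set.mul_mem_mul A.one_mem (B.normalCore_le hx)
end
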